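/- Let λ(n, b_1, b_2) denote the number of ways to select b_1 1-arcs and b_2 2-arcs over {1,…,n} such that all selected arcs are pairwise vertex-disjoint. Then λ satisfies the recursion λ(n, b_1, b_2) = λ(n-2, b_1-1, b_2) + λ(n-1, b_1, b_2) + λ(n-4, b_1, b_2-2) + λ(n-3, b_1, b_2-1) for n ≥ 5, b_1 ≥ 1, b_2 ≥ 2, with the convention that λ vanishes when any argument is negative, and with initial conditions λ(n, 0, 0) = 1 and λ(n, b_1, 0) = C(n-b_1, b_1), where C(·,·) is the binomial coefficient. -/

import Mathlib

/-- A set of arcs (ordered pairs of vertices) is pairwise vertex-disjoint. -/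
def ArcsDisjoint (M : Finset (ℕ × ℕ)) : Prop :=
  ∀ p ∈ M, ∀ q ∈ M, p ≠ q → p.1 ≠ q.1 ∧ p.1 ≠ q.2 ∧ p.2 ≠ q.1 ∧ p.2 ≠ q.2

/-- `M` is a partial matching on `{1,…,n}`: arcs `(i,j)` with `1 ≤ i < j ≤ n`,
every vertex in at most one arc. -/
def IsPartialMatching (n : ℕ) (M : Finset (ℕ × ℕ)) : Prop :=
  (∀ p ∈ M, 1 ≤ p.1 ∧ p.1 < p.2 ∧ p.2 ≤ n) ∧ ArcsDisjoint M

/-- `M` contains `k` mutually crossing arcs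
`(i₁,j₁),…,(i_k,j_k)` with `i₁ < ⋯ < i_k < j₁ < ⋯ < j_k`. -/
def HasKCrossing (k : ℕ) (M : Finset (ℕ × ℕ)) : Prop :=
  ∃ f : Fin k → ℕ × ℕ, (∀ r, f r ∈ M) ∧
    (StrictMono fun r => (f r).1) ∧ (StrictMono fun r => (f r).2) ∧
    ∀ r s : Fin k, (f r).1 < (f s).2

/-- `M` is `k`-noncrossing. -/
def KNoncrossing (k : ℕ) (M : Finset (ℕ × ℕ)) : Prop := ¬ HasKCrossing k M

/-- The number of isolated vertices of `M` in `{1,…,n}`. -/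
def isolatedCount (n : ℕ) (M : Finset (ℕ × ℕ)) : ℕ :=
  ((Finset.Icc 1 n).filter fun v => ∀ p ∈ M, p.1 ≠ v ∧ p.2 ≠ v).card

/-- `fMatch k n ℓ`: the number of `k`-noncrossing partial matchings on `{1,…,n}`
with exactly `ℓ` isolated vertices. -/
noncomputable def fMatch (k n ℓ : ℕ) : ℕ :=
  Nat.card {M : Finset (ℕ × ℕ) //
    IsPartialMatching n M ∧ KNoncrossing k M ∧ isolatedCount n M = ℓ}

/-- `p` is a 1-arc over `{1,…,n}`, i.e. `p = (i, i+1)` with `1 ≤ i ≤ n-1`. -/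
def IsOneArc (n : ℕ) (p : ℕ × ℕ) : Prop :=
  1 ≤ p.1 ∧ p.1 + 1 ≤ n ∧ p.2 = p.1 + 1

/-- `p` is a 2-arc over `{1,…,n}`, i.e. `p = (i, i+2)` with `1 ≤ i ≤ n-2`. -/
def IsTwoArc (n : ℕ) (p : ℕ × ℕ) : Prop :=
  1 ≤ p.1 ∧ p.1 + 2 ≤ n ∧ p.2 = p.1 + 2

/-- `λ(n, b₁, b₂)`: the number of ways to select `b₁` 1-arcs and `b₂` 2-arcs
over `{1,…,n}` such that all selected arcs are pairwise vertex-disjoint. -/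
noncomputable def lamSel (n b₁ b₂ : ℕ) : ℕ :=
  Nat.card {A : Finset (ℕ × ℕ) //
    (∀ p ∈ A, IsOneArc n p ∨ IsTwoArc n p) ∧ ArcsDisjoint A ∧
    (A.filter fun p => p.2 = p.1 + 1).card = b₁ ∧
    (A.filter fun p => p.2 = p.1 + 2).card = b₂}

/-! A selection on `{1,…,n}` ends in exactly one of four blocks: `n` is free, `n` is covered by
the 1-arc `(n-1, n)`, by a 2-arc `(n-2, n)` whose middle vertex is free, or by the crossing pair
`(n-3, n-1), (n-2, n)`. The arcs outside the block end at `n-1`, `n-2`, `n-3`, `n-4` respectively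
and form an arbitrary selection there, so deleting the block is a bijection onto the selections
on a shorter interval. Without 2-arcs only the first two blocks occur, which is Pascal's rule for
`C(n-b₁, b₁)`. -/

open Finset

def IsArcSel (n : ℕ) (A : Finset (ℕ × ℕ)) : Prop :=
  (∀ p ∈ A, IsOneArc n p ∨ IsTwoArc n p) ∧ ArcsDisjoint A

def oneArcs (A : Finset (ℕ × ℕ)) : Finset (ℕ × ℕ) := A.filter fun p => p.2 = p.1 + 1

def twoArcs (A : Finset (ℕ × ℕ)) : Finset (ℕ × ℕ) := A.filter fun p => p.2 = p.1 + 2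

def arcsEndingAfter (m : ℕ) (A : Finset (ℕ × ℕ)) : Finset (ℕ × ℕ) :=
  A.filter fun p => m < p.2

open scoped Classical in
noncomputable def arcSels (n b₁ b₂ : ℕ) : Finset (Finset (ℕ × ℕ)) :=
  {A ∈ (Icc 1 n ×ˢ Icc 1 n).powerset |
    IsArcSel n A ∧ #(oneArcs A) = b₁ ∧ #(twoArcs A) = b₂}

variable {n m b₁ b₂ c₁ c₂ : ℕ} {A B T : Finset (ℕ × ℕ)} {p q : ℕ × ℕ}

namespace IsArcSel

theorem bounds (hA : IsArcSel n A) (hp : p ∈ A) :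
    1 ≤ p.1 ∧ p.2 ≤ n ∧ (p.2 = p.1 + 1 ∨ p.2 = p.1 + 2) := by
  rcases hA.1 p hp with ⟨h1, h2, h3⟩ | ⟨h1, h2, h3⟩ <;> omega

theorem eq_or_disjoint (hA : IsArcSel n A) (hp : p ∈ A) (hq : q ∈ A) :
    p = q ∨ p.1 ≠ q.1 ∧ p.1 ≠ q.2 ∧ p.2 ≠ q.1 ∧ p.2 ≠ q.2 :=
  (em (p = q)).imp_right (hA.2 p hp q hq)

theorem eq_empty_of_le_one (hA : IsArcSel n A) (hn : n ≤ 1) : A = ∅ :=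
  eq_empty_of_forall_notMem fun p hp => by have := hA.bounds hp; omega

theorem of_subset (hA : IsArcSel n A) (hBA : B ⊆ A) (hB : ∀ p ∈ B, p.2 ≤ m) :
    IsArcSel m B := by
  refine ⟨fun p hp => ?_, fun p hp q hq => hA.2 p (hBA hp) q (hBA hq)⟩
  have := hB p hp
  rcases hA.1 p (hBA hp) with ⟨h1, -, h3⟩ | ⟨h1, -, h3⟩
  · exact Or.inl ⟨h1, by omega, h3⟩
  · exact Or.inr ⟨h1, by omega, h3⟩

theorem union (hB : IsArcSel m B) (hT : IsArcSel n T) (hmn : m ≤ n)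
    (hTm : ∀ p ∈ T, m < p.1) : IsArcSel n (B ∪ T) := by
  refine ⟨fun p hp => ?_, fun p hp q hq hpq => ?_⟩
  · rcases mem_union.1 hp with hp | hp
    · exact (hB.1 p hp).imp (fun h => ⟨h.1, h.2.1.trans hmn, h.2.2⟩)
        (fun h => ⟨h.1, h.2.1.trans hmn, h.2.2⟩)
    · exact hT.1 p hp
  rcases mem_union.1 hp with hp | hp <;> rcases mem_union.1 hq with hq | hq
  · exact hB.2 p hp q hq hpq
  · have := hB.bounds hp; have := hT.bounds hq; have := hTm q hq; omega
  · have := hT.bounds hp; have := hB.bounds hq; have := hTm p hp; omega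
  · exact hT.2 p hp q hq hpq

end IsArcSel

theorem mem_arcSels :
    A ∈ arcSels n b₁ b₂ ↔ IsArcSel n A ∧ #(oneArcs A) = b₁ ∧ #(twoArcs A) = b₂ := by
  classical
  refine mem_filter.trans (and_iff_right_of_imp fun hA => mem_powerset.2 fun p hp => ?_)
  have := hA.1.bounds hp
  simp only [mem_product, mem_Icc]
  omega

theorem lamSel_eq_card (n b₁ b₂ : ℕ) : lamSel n b₁ b₂ = #(arcSels n b₁ b₂) := by
  rw [lamSel, ← Nat.card_eq_finsetCard]
  exact Nat.card_congr (Equiv.subtypeEquivRight fun A => (mem_arcSels.trans and_assoc).symm)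

theorem card_filter_union_of_disjoint {α : Type*} [DecidableEq α] {s t : Finset α}
    (r : α → Prop) [DecidablePred r] (h : Disjoint s t) :
    #((s ∪ t).filter r) = #(s.filter r) + #(t.filter r) := by
  rw [filter_union, card_union_of_disjoint (disjoint_filter_filter h)]

theorem filter_snd_le_union_arcsEndingAfter (m : ℕ) (A : Finset (ℕ × ℕ)) :
    A.filter (·.2 ≤ m) ∪ arcsEndingAfter m A = A := by
  ext p
  simp only [arcsEndingAfter, mem_union, mem_filter]
  by_cases h : p.2 ≤ m <;> simp [h, Nat.lt_of_not_le]

theorem subset_of_arcsEndingAfter_eq (h : arcsEndingAfter m A = T) : T ⊆ A :=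
  h ▸ filter_subset _ _

theorem mem_of_arcsEndingAfter_eq (h : arcsEndingAfter m A = T) (hp : p ∈ A) (hm : m < p.2) :
    p ∈ T :=
  h ▸ mem_filter.2 ⟨hp, hm⟩

theorem arcsEndingAfter_eq_of (hTA : T ⊆ A) (hTm : ∀ p ∈ T, m < p.2)
    (hAT : ∀ p ∈ A, m < p.2 → p ∈ T) : arcsEndingAfter m A = T :=
  ext fun p => ⟨fun hp => hAT p (mem_filter.1 hp).1 (mem_filter.1 hp).2,
    fun hp => mem_filter.2 ⟨hTA hp, hTm p hp⟩⟩

namespace IsArcSel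

theorem filter_union_snd_le (hB : IsArcSel m B) (hT : IsArcSel n T)
    (hTm : ∀ p ∈ T, m < p.1) : (B ∪ T).filter (·.2 ≤ m) = B := by
  rw [filter_union, filter_true_of_mem fun p hp => (hB.bounds hp).2.1,
    filter_false_of_mem fun p hp => by have := hTm p hp; have := hT.bounds hp; omega,
    union_empty]

theorem arcsEndingAfter_union (hB : IsArcSel m B) (hT : IsArcSel n T)
    (hTm : ∀ p ∈ T, m < p.1) : arcsEndingAfter m (B ∪ T) = T := by
  rw [arcsEndingAfter, filter_union,
    filter_false_of_mem fun p hp => by have := (hB.bounds hp).2.1; omega,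
    filter_true_of_mem fun p hp => by have := hTm p hp; have := hT.bounds hp; omega,
    empty_union]

theorem union_mem_arcSels_iff (hB : IsArcSel m B) (hT : IsArcSel n T)
    (hTm : ∀ p ∈ T, m < p.1) (hmn : m ≤ n)
    (h₁ : #(oneArcs T) + c₁ = b₁) (h₂ : #(twoArcs T) + c₂ = b₂) :
    B ∪ T ∈ arcSels n b₁ b₂ ↔ B ∈ arcSels m c₁ c₂ := by
  have hd : Disjoint B T :=
    disjoint_left.2 fun p hpB hpT => by have := hB.bounds hpB; have := hTm p hpT; omega
  rw [mem_arcSels, mem_arcSels]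
  unfold oneArcs twoArcs at *
  rw [card_filter_union_of_disjoint _ hd, card_filter_union_of_disjoint _ hd]
  simp only [hB, hB.union hT hmn hTm, true_and]
  omega

end IsArcSel

theorem card_filter_arcsEndingAfter_eq (hT : IsArcSel n T) (hmn : m ≤ n)
    (hTm : ∀ p ∈ T, m < p.1) (h₁ : #(oneArcs T) + c₁ = b₁)
    (h₂ : #(twoArcs T) + c₂ = b₂) :
    #{A ∈ arcSels n b₁ b₂ | arcsEndingAfter m A = T} = #(arcSels m c₁ c₂) := by
  refine card_nbij' (fun A => A.filter (·.2 ≤ m)) (· ∪ T) (fun A hA => ?_) (fun B hB => ?_)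
    (fun A hA => ?_) (fun B hB => ?_)
  · obtain ⟨hA, hAT⟩ := mem_filter.1 hA
    have hlow : IsArcSel m (A.filter (·.2 ≤ m)) :=
      (mem_arcSels.1 hA).1.of_subset (filter_subset _ _) fun p hp => (mem_filter.1 hp).2
    rwa [← filter_snd_le_union_arcsEndingAfter m A, hAT,
      hlow.union_mem_arcSels_iff hT hTm hmn h₁ h₂] at hA
  · have hB' := (mem_arcSels.1 hB).1
    exact mem_filter.2 ⟨(hB'.union_mem_arcSels_iff hT hTm hmn h₁ h₂).2 hB,
      hB'.arcsEndingAfter_union hT hTm⟩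
  · conv_rhs => rw [← filter_snd_le_union_arcsEndingAfter m A, (mem_filter.1 hA).2]
  · exact (mem_arcSels.1 hB).1.filter_union_snd_le hT hTm

theorem card_filter_arcSels_eq_of_iff {P : Finset (ℕ × ℕ) → Prop} [DecidablePred P]
    (hP : ∀ A ∈ arcSels n b₁ b₂, arcsEndingAfter m A = T ↔ P A) (hT : IsArcSel n T)
    (hmn : m ≤ n) (hTm : ∀ p ∈ T, m < p.1) (h₁ : #(oneArcs T) + c₁ = b₁)
    (h₂ : #(twoArcs T) + c₂ = b₂) :
    #{A ∈ arcSels n b₁ b₂ | P A} = #(arcSels m c₁ c₂) := by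
  rw [← filter_congr hP]
  exact card_filter_arcsEndingAfter_eq hT hmn hTm h₁ h₂

namespace IsArcSel

theorem arcsEndingAfter_sub_one_eq_empty_iff (hA : IsArcSel n A) :
    arcsEndingAfter (n - 1) A = ∅ ↔ (n - 1, n) ∉ A ∧ (n - 2, n) ∉ A := by
  constructor
  · intro h
    constructor <;> intro hp <;> have := hA.bounds hp <;>
      simpa using mem_of_arcsEndingAfter_eq h hp (by dsimp only; omega)
  · rintro ⟨h₁, h₂⟩
    refine arcsEndingAfter_eq_of (empty_subset _) (by simp) fun ⟨x, y⟩ hp hy => ?_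
    have := hA.bounds hp
    have := ne_of_mem_of_not_mem hp h₁
    have := ne_of_mem_of_not_mem hp h₂
    simp only [ne_eq, Prod.mk.injEq] at *
    omega

theorem arcsEndingAfter_sub_two_eq_iff (hA : IsArcSel n A) :
    arcsEndingAfter (n - 2) A = {(n - 1, n)} ↔ (n - 1, n) ∈ A := by
  refine ⟨fun h => subset_of_arcsEndingAfter_eq h (mem_singleton_self _), fun h₁ => ?_⟩
  have := hA.bounds h₁
  refine arcsEndingAfter_eq_of (by simpa) (by simp; omega) fun ⟨x, y⟩ hp hy => ?_
  rcases hA.eq_or_disjoint hp h₁ with h | h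
  · simp [h]
  have := hA.bounds hp
  dsimp only at *
  omega

theorem arcsEndingAfter_sub_three_eq_iff (hA : IsArcSel n A) :
    arcsEndingAfter (n - 3) A = {(n - 2, n)} ↔
      ((n - 1, n) ∉ A ∧ (n - 2, n) ∈ A) ∧ (n - 3, n - 1) ∉ A := by
  constructor
  · intro h
    have h₂ := subset_of_arcsEndingAfter_eq h (mem_singleton_self _)
    have := hA.bounds h₂
    refine ⟨⟨fun h₁ => ?_, h₂⟩, fun h₃ => ?_⟩
    all_goals
      have := mem_of_arcsEndingAfter_eq h ‹_› (by dsimp only; omega)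
      simp only [mem_singleton, Prod.mk.injEq] at this
      omega
  · rintro ⟨⟨-, h₂⟩, h₃⟩
    have := hA.bounds h₂
    refine arcsEndingAfter_eq_of (by simpa) (by simp; omega) fun ⟨x, y⟩ hp hy => ?_
    rcases hA.eq_or_disjoint hp h₂ with h | h
    · simp [h]
    have := hA.bounds hp
    have := ne_of_mem_of_not_mem hp h₃
    simp only [ne_eq, Prod.mk.injEq] at *
    omega

theorem arcsEndingAfter_sub_four_eq_iff (hA : IsArcSel n A) :
    arcsEndingAfter (n - 4) A = {(n - 3, n - 1), (n - 2, n)} ↔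
      ((n - 1, n) ∉ A ∧ (n - 2, n) ∈ A) ∧ (n - 3, n - 1) ∈ A := by
  constructor
  · intro h
    have h₂ := subset_of_arcsEndingAfter_eq h (mem_insert_of_mem (mem_singleton_self _))
    have h₃ := subset_of_arcsEndingAfter_eq h (mem_insert_self _ _)
    have := hA.bounds h₃
    refine ⟨⟨fun h₁ => ?_, h₂⟩, h₃⟩
    have := mem_of_arcsEndingAfter_eq h h₁ (by dsimp only; omega)
    simp only [mem_insert, mem_singleton, Prod.mk.injEq] at this
    omega
  · rintro ⟨⟨-, h₂⟩, h₃⟩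
    have := hA.bounds h₃
    refine arcsEndingAfter_eq_of (by simp [insert_subset_iff, *]) (by simp; omega)
      fun ⟨x, y⟩ hp hy => ?_
    rcases hA.eq_or_disjoint hp h₂ with h | h
    · simp [h]
    rcases hA.eq_or_disjoint hp h₃ with h' | h'
    · simp [h']
    have := hA.bounds hp
    dsimp only at *
    omega

end IsArcSel

theorem card_arcSels_eq_add_add_add (hn : 4 ≤ n) (h₁ : 1 ≤ b₁) (h₂ : 2 ≤ b₂) :
    #(arcSels n b₁ b₂) = #(arcSels (n - 2) (b₁ - 1) b₂) + #(arcSels (n - 1) b₁ b₂) +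
      #(arcSels (n - 4) b₁ (b₂ - 2)) + #(arcSels (n - 3) b₁ (b₂ - 1)) := by
  obtain ⟨k, rfl⟩ := Nat.exists_eq_add_of_le' hn
  have sel : ∀ A ∈ arcSels (k + 4) b₁ b₂, IsArcSel (k + 4) A := fun A hA =>
    (mem_arcSels.1 hA).1
  have hsplit₁ := card_filter_add_card_filter_not (s := arcSels (k + 4) b₁ b₂)
    fun A => (k + 4 - 1, k + 4) ∈ A
  have hsplit₂ := card_filter_add_card_filter_not
    (s := {A ∈ arcSels (k + 4) b₁ b₂ | (k + 4 - 1, k + 4) ∉ A})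
    fun A => (k + 4 - 2, k + 4) ∈ A
  have hsplit₃ := card_filter_add_card_filter_not
    (s := {A ∈ arcSels (k + 4) b₁ b₂ | (k + 4 - 1, k + 4) ∉ A ∧ (k + 4 - 2, k + 4) ∈ A})
    fun A => (k + 4 - 3, k + 4 - 1) ∈ A
  simp only [filter_filter] at hsplit₂ hsplit₃
  have hfree := card_filter_arcSels_eq_of_iff (c₁ := b₁) (c₂ := b₂)
    (fun A hA => (sel A hA).arcsEndingAfter_sub_one_eq_empty_iff)
    (by simp [IsArcSel, ArcsDisjoint]) (by omega) (by simp) (by simp [oneArcs])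
    (by simp [twoArcs])
  have hone := card_filter_arcSels_eq_of_iff (c₁ := b₁ - 1) (c₂ := b₂)
    (fun A hA => (sel A hA).arcsEndingAfter_sub_two_eq_iff)
    (by simp [IsArcSel, ArcsDisjoint, IsOneArc]) (by omega) (by simp)
    (by simp [oneArcs, filter_singleton]; omega) (by simp [twoArcs, filter_singleton])
  have htwo := card_filter_arcSels_eq_of_iff (c₁ := b₁) (c₂ := b₂ - 1)
    (fun A hA => (sel A hA).arcsEndingAfter_sub_three_eq_iff)
    (by simp [IsArcSel, ArcsDisjoint, IsTwoArc]) (by omega) (by simp)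
    (by simp [oneArcs, filter_singleton]) (by simp [twoArcs, filter_singleton]; omega)
  have hcross := card_filter_arcSels_eq_of_iff (c₁ := b₁) (c₂ := b₂ - 2)
    (fun A hA => (sel A hA).arcsEndingAfter_sub_four_eq_iff)
    (by simp [IsArcSel, ArcsDisjoint, IsTwoArc]) (by omega) (by simp)
    (by simp [oneArcs, filter_insert, filter_singleton])
    (by simp [twoArcs, filter_insert, filter_singleton]; omega)
  omega

theorem notMem_of_card_twoArcs_eq_zero (hA : #(twoArcs A) = 0) (hp : p.2 = p.1 + 2) :
    p ∉ A := by
  rw [twoArcs, card_eq_zero, filter_eq_empty_iff] at hA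
  exact fun h => hA h hp

theorem card_arcSels_zero_eq_add (hn : 2 ≤ n) (h₁ : 1 ≤ b₁) :
    #(arcSels n b₁ 0) = #(arcSels (n - 1) b₁ 0) + #(arcSels (n - 2) (b₁ - 1) 0) := by
  obtain ⟨k, rfl⟩ := Nat.exists_eq_add_of_le' hn
  have sel : ∀ A ∈ arcSels (k + 2) b₁ 0, IsArcSel (k + 2) A := fun A hA =>
    (mem_arcSels.1 hA).1
  have hsplit := card_filter_add_card_filter_not (s := arcSels (k + 2) b₁ 0)
    fun A => (k + 2 - 1, k + 2) ∈ A
  have hfree := card_filter_arcSels_eq_of_iff (c₁ := b₁) (c₂ := 0)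
    (fun A hA => (sel A hA).arcsEndingAfter_sub_one_eq_empty_iff.trans
      (and_iff_left (notMem_of_card_twoArcs_eq_zero (mem_arcSels.1 hA).2.2 (by simp))))
    (by simp [IsArcSel, ArcsDisjoint]) (by omega) (by simp) (by simp [oneArcs])
    (by simp [twoArcs])
  have hone := card_filter_arcSels_eq_of_iff (c₁ := b₁ - 1) (c₂ := 0)
    (fun A hA => (sel A hA).arcsEndingAfter_sub_two_eq_iff)
    (by simp [IsArcSel, ArcsDisjoint, IsOneArc]) (by omega) (by simp)
    (by simp [oneArcs, filter_singleton]; omega) (by simp [twoArcs, filter_singleton])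
  omega

theorem arcSels_zero_zero (n : ℕ) : arcSels n 0 0 = {∅} := by
  ext A
  rw [mem_arcSels, mem_singleton]
  refine ⟨fun ⟨hA, h₁, h₂⟩ => eq_empty_of_forall_notMem fun p hp => ?_, ?_⟩
  · rw [oneArcs, card_eq_zero, filter_eq_empty_iff] at h₁
    rw [twoArcs, card_eq_zero, filter_eq_empty_iff] at h₂
    exact (hA.bounds hp).2.2.elim (h₁ hp) (h₂ hp)
  · rintro rfl
    simp [IsArcSel, ArcsDisjoint, oneArcs, twoArcs]

theorem arcSels_eq_empty_of_le_one (hn : n ≤ 1) (h₁ : 1 ≤ b₁) : arcSels n b₁ b₂ = ∅ :=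
  eq_empty_of_forall_notMem fun A hA => by
    obtain ⟨hA, hA₁, -⟩ := mem_arcSels.1 hA
    rw [hA.eq_empty_of_le_one hn] at hA₁
    simp only [oneArcs, filter_empty, card_empty] at hA₁
    omega

theorem choose_sub_succ_eq_add (hn : 2 ≤ n) (c : ℕ) :
    (n - (c + 1)).choose (c + 1) = (n - 1 - (c + 1)).choose (c + 1) + (n - 2 - c).choose c := by
  rcases le_or_gt (c + 2) n with h | h
  · obtain ⟨d, rfl⟩ := Nat.exists_eq_add_of_le' h
    rw [show d + (c + 2) - (c + 1) = d + 1 by omega, show d + (c + 2) - 1 - (c + 1) = d by omega,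
      show d + (c + 2) - 2 - c = d by omega, Nat.choose_succ_succ', add_comm]
  · rw [Nat.choose_eq_zero_of_lt (by omega), Nat.choose_eq_zero_of_lt (by omega),
      Nat.choose_eq_zero_of_lt (by omega)]

theorem card_arcSels_zero (n b₁ : ℕ) : #(arcSels n b₁ 0) = (n - b₁).choose b₁ := by
  induction n using Nat.strong_induction_on generalizing b₁ with
  | _ n ih =>
    rcases b₁ with _ | c
    · simp [arcSels_zero_zero]
    rcases le_or_gt n 1 with hn | hn
    · rw [arcSels_eq_empty_of_le_one hn (by omega), card_empty,
        Nat.choose_eq_zero_of_lt (by omega)]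
    rw [card_arcSels_zero_eq_add hn (by omega), ih _ (by omega), ih _ (by omega),
      choose_sub_succ_eq_add hn, Nat.add_sub_cancel]

/-- `λ(n,b₁,b₂)` satisfies the recursion
`λ(n,b₁,b₂) = λ(n-2,b₁-1,b₂) + λ(n-1,b₁,b₂) + λ(n-4,b₁,b₂-2) + λ(n-3,b₁,b₂-1)`
for `n ≥ 5`, `b₁ ≥ 1`, `b₂ ≥ 2`, with initial conditions `λ(n,0,0) = 1` and
`λ(n,b₁,0) = C(n-b₁,b₁)`. -/
theorem lamSel_recursion :
    (∀ n b₁ b₂ : ℕ, 5 ≤ n → 1 ≤ b₁ → 2 ≤ b₂ →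
      lamSel n b₁ b₂ =
        lamSel (n - 2) (b₁ - 1) b₂ + lamSel (n - 1) b₁ b₂ +
          lamSel (n - 4) b₁ (b₂ - 2) + lamSel (n - 3) b₁ (b₂ - 1)) ∧
    (∀ n : ℕ, lamSel n 0 0 = 1) ∧
    (∀ n b₁ : ℕ, lamSel n b₁ 0 = (n - b₁).choose b₁) := by
  simp only [lamSel_eq_card]
  refine ⟨fun n b₁ b₂ hn h₁ h₂ => card_arcSels_eq_add_add_add (by omega) h₁ h₂,
    fun n => by rw [arcSels_zero_zero, card_singleton], card_arcSels_zero⟩
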